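/- If the support of the initial loopless multigraph G(0) on n ≥ 2 vertices is bipartite, then every NSB evacuation run has evacuation time T exactly equal to Δ(0), the maximum degree of G(0), and moreover Δ(0) equals the minimum evacuation time X′ of G(0); that is, NSB is evacuation-time-optimal in bipartite graphs. -/

import Mathlib

open scoped Classical

namespace NSBPaper

variable {V : Type} [Fintype V] [DecidableEq V]

/-- Degree of a vertex in a loopless multigraph given by multiplicity function `w`. -/
def deg (w : V → V → ℕ) (v : V) : ℕ := ∑ u, w v u

/-- Maximum degree of the multigraph. -/
def maxDeg (w : V → V → ℕ) : ℕ := Finset.univ.sup fun v => deg w v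

/-- The support simple graph of a multigraph: `u` and `v` are adjacent iff `u ≠ v`
and there is at least one multi-edge between them. -/
def support (w : V → V → ℕ) : SimpleGraph V where
  Adj u v := u ≠ v ∧ 1 ≤ w u v ∧ 1 ≤ w v u
  symm := ⟨fun u v h => ⟨h.1.symm, h.2.2, h.2.1⟩⟩
  loopless := ⟨fun v h => h.1 rfl⟩

/-- A set of unordered pairs `M` saturates a vertex `v` if some pair of `M` contains `v`. -/
def Saturates (M : Finset (Sym2 V)) (v : V) : Prop := ∃ e ∈ M, v ∈ e

/-- `M` is a matching of the multigraph `w`: its elements are non-loop edges of the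
support, and no two distinct elements share a vertex. -/
def IsMatching (w : V → V → ℕ) (M : Finset (Sym2 V)) : Prop :=
  (∀ e ∈ M, ¬ e.IsDiag) ∧
  (∀ u v : V, s(u, v) ∈ M → 1 ≤ w u v) ∧
  (∀ e ∈ M, ∀ f ∈ M, e ≠ f → ∀ x : V, x ∈ e → x ∉ f)

/-- `M` is a maximal matching of `w`: no pair can be added keeping it a matching. -/
def IsMaximalMatching (w : V → V → ℕ) (M : Finset (Sym2 V)) : Prop :=
  IsMatching w M ∧ ∀ e : Sym2 V, e ∉ M → ¬ IsMatching w (insert e M)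

/-- Removing a matching `M` from the multigraph `w`: the multiplicity of each pair in `M`
decreases by one. -/
def removeMatching (w : V → V → ℕ) (M : Finset (Sym2 V)) : V → V → ℕ :=
  fun u v => if s(u, v) ∈ M then w u v - 1 else w u v

/-- The subgraph of `G` induced by `Z` is bipartite: there is a set `A` such that every
edge of `G` inside `Z` joins `A` to its complement. -/
def BipartiteOn (G : SimpleGraph V) (Z : Set V) : Prop :=
  ∃ A : Set V, ∀ ⦃u v : V⦄, u ∈ Z → v ∈ Z → G.Adj u v → (u ∈ A ↔ v ∉ A)

/-- The edge multiset of `w` can be partitioned into `T` matchings. -/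
def CanEvacuate (w : V → V → ℕ) (T : ℕ) : Prop :=
  ∃ M : Fin T → Finset (Sym2 V),
    (∀ j, IsMatching w (M j)) ∧
    ∀ u v : V, (Finset.univ.filter fun j => s(u, v) ∈ M j).card = w u v

/-- The vertex-weight of a matching: the sum of the weights of its saturated vertices. -/
noncomputable def matchWeight (φ : V → ℕ) (M : Finset (Sym2 V)) : ℕ :=
  ∑ v : V, if Saturates M v then φ v else 0

/-- `Rfun M k i = 1` iff vertex `i` is saturated by the matching chosen in slot `k`. -/
noncomputable def Rfun (M : ℕ → Finset (Sym2 V)) (k : ℕ) (i : V) : ℕ :=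
  if Saturates (M k) i then 1 else 0

/-- `Ufun M k i` is `R i (k-1) * R i (k-2)` if `k ≡ 2 [MOD 3]` and `R i (k-1)` otherwise,
with `R i k = 0` for `k < 0`. -/
noncomputable def Ufun (M : ℕ → Finset (Sym2 V)) (k : ℕ) (i : V) : ℕ :=
  if k = 0 then 0
  else if k % 3 = 2 then Rfun M (k - 1) i * Rfun M (k - 2) i
  else Rfun M (k - 1) i

/-- Vertex `i` is heavy in `w`: `n * d(i) ≥ (n - 1) * Δ`. -/
def Heavy (w : V → V → ℕ) (i : V) : Prop :=
  (Fintype.card V - 1) * maxDeg w ≤ Fintype.card V * deg w i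

/-- Vertex `i` is critical in `w`: its degree is the maximum degree. -/
def Critical (w : V → V → ℕ) (i : V) : Prop := deg w i = maxDeg w

/-- The NSB weight of vertex `i`, where `u i` records whether `i` received enough
service previously. -/
noncomputable def nsbWeight (w : V → V → ℕ) (u : V → ℕ) (i : V) : ℕ :=
  if Heavy w i then deg w i * (2 - u i) else deg w i

/-- The LC-NSB weight of vertex `i`. -/
noncomputable def lcnsbWeight (w : V → V → ℕ) (u : V → ℕ) (i : V) : ℕ :=
  if Critical w i then 5 - 2 * u i
  else if Heavy w i then 4 - 2 * u i
  else 1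

/-- An NSB evacuation run on the initial multigraph `w0`: in each slot `k`, a matching
`M k` of `G k` maximizing the total NSB weight of saturated vertices is removed. -/
structure NSBRun (w0 : V → V → ℕ) where
  G : ℕ → V → V → ℕ
  M : ℕ → Finset (Sym2 V)
  init : G 0 = w0
  step : ∀ k, G (k + 1) = removeMatching (G k) (M k)
  matching : ∀ k, IsMatching (G k) (M k)
  opt : ∀ k, ∀ M' : Finset (Sym2 V), IsMatching (G k) M' →
    matchWeight (nsbWeight (G k) (Ufun M k)) M' ≤ matchWeight (nsbWeight (G k) (Ufun M k)) (M k)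

/-- An LC-NSB evacuation run on the initial multigraph `w0`. -/
structure LCNSBRun (w0 : V → V → ℕ) where
  G : ℕ → V → V → ℕ
  M : ℕ → Finset (Sym2 V)
  init : G 0 = w0
  step : ∀ k, G (k + 1) = removeMatching (G k) (M k)
  matching : ∀ k, IsMatching (G k) (M k)
  opt : ∀ k, ∀ M' : Finset (Sym2 V), IsMatching (G k) M' →
    matchWeight (lcnsbWeight (G k) (Ufun M k)) M' ≤
      matchWeight (lcnsbWeight (G k) (Ufun M k)) (M k)

end NSBPaper

/-!
Since the support is bipartite, Hall's theorem gives for each side a matching covering all heavy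
vertices of that side: a set `S` of them satisfies `(n - 1) Δ |S| ≤ n ∑_S d ≤ n Δ |N(S)|`.
If an NSB-optimal matching `M` missed a vertex `i` of maximum degree, switching `M` along the
alternating path from `i` in `M ∪ N`, where `N` covers the heavy vertices of the side of `i`, would
gain `i` (weight `≥ Δ` as `U ≤ 1`) and lose at most the far end of the path; that vertex lies on the
side of `i` and is not covered by `N`, so it is not heavy and has weight `< Δ`. Hence every slot
covers all vertices of maximum degree, `Δ` drops by exactly one per slot, and the run evacuates
in `Δ(0)` slots, which is optimal because a vertex of degree `Δ(0)` needs that many matchings.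
-/

namespace NSBPaper

variable {V : Type}

lemma saturates_iff_exists_mem {M : Finset (Sym2 V)} {v : V} :
    Saturates M v ↔ ∃ y, s(v, y) ∈ M := by
  constructor
  · rintro ⟨e, he, hv⟩
    exact ⟨Sym2.Mem.other hv, by rwa [Sym2.other_spec hv]⟩
  · rintro ⟨y, hy⟩
    exact ⟨s(v, y), hy, Sym2.mem_mk_left v y⟩

lemma Saturates.mono {M M' : Finset (Sym2 V)} {v : V} (h : M ⊆ M') (hv : Saturates M v) :
    Saturates M' v :=
  let ⟨e, he, hve⟩ := hv
  ⟨e, h he, hve⟩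

section DecidableEq

variable [DecidableEq V]

lemma saturates_insert_iff {M : Finset (Sym2 V)} {e : Sym2 V} {v : V} :
    Saturates (insert e M) v ↔ v ∈ e ∨ Saturates M v := by
  simp only [Saturates, Finset.mem_insert, exists_eq_or_imp]

lemma saturates_union_iff {M N : Finset (Sym2 V)} {v : V} :
    Saturates (M ∪ N) v ↔ Saturates M v ∨ Saturates N v := by
  simp only [Saturates, Finset.mem_union, or_and_right, exists_or]

lemma saturates_erase_iff {M : Finset (Sym2 V)} {e : Sym2 V} {v : V} (he : e ∈ M) :
    Saturates M v ↔ v ∈ e ∨ Saturates (M.erase e) v := by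
  rw [← saturates_insert_iff, Finset.insert_erase he]

end DecidableEq

namespace IsMatching

variable {w : V → V → ℕ} {M : Finset (Sym2 V)}

lemma mono {M' : Finset (Sym2 V)} (hM : IsMatching w M) (h : M' ⊆ M) : IsMatching w M' :=
  ⟨fun e he => hM.1 e (h he), fun u v huv => hM.2.1 u v (h huv),
    fun e he f hf hef x hx => hM.2.2 e (h he) f (h hf) hef x hx⟩

lemma of_le {w' : V → V → ℕ} (hM : IsMatching w M) (hw : ∀ u v, w u v ≤ w' u v) :
    IsMatching w' M :=
  ⟨hM.1, fun u v huv => (hM.2.1 u v huv).trans (hw u v), hM.2.2⟩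

lemma ne_of_mem (hM : IsMatching w M) {a b : V} (h : s(a, b) ∈ M) : a ≠ b := by
  rintro rfl
  exact hM.1 _ h (Sym2.mk_isDiag_iff.mpr rfl)

lemma eq_of_mem (hM : IsMatching w M) {v a b : V} (ha : s(v, a) ∈ M) (hb : s(v, b) ∈ M) :
    a = b := by
  by_contra hab
  exact hM.2.2 _ ha _ hb (fun h => hab (Sym2.congr_right.mp h)) v (Sym2.mem_mk_left v a)
    (Sym2.mem_mk_left v b)

variable [DecidableEq V]

lemma not_saturates_erase (hM : IsMatching w M) {e : Sym2 V} (he : e ∈ M) {v : V} (hv : v ∈ e) :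
    ¬ Saturates (M.erase e) v := by
  rintro ⟨f, hf, hvf⟩
  exact hM.2.2 f (Finset.mem_of_mem_erase hf) e he (Finset.ne_of_mem_erase hf) v hvf hv

lemma insert_of_mem {N : Finset (Sym2 V)} (hM : IsMatching w M) (hN : IsMatching w N)
    {a b : V} (hab : s(a, b) ∈ N) (ha : ¬ Saturates M a) (hb : ¬ Saturates M b) :
    IsMatching w (Insert.insert s(a, b) M) := by
  refine ⟨?_, ?_, ?_⟩
  · intro e he
    rcases Finset.mem_insert.mp he with rfl | heM
    · exact hN.1 _ hab
    · exact hM.1 e heM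
  · intro u v huv
    rcases Finset.mem_insert.mp huv with h | h
    · exact hN.2.1 u v (h ▸ hab)
    · exact hM.2.1 u v h
  · intro e he f hf hef x hx hxf
    rcases Finset.mem_insert.mp he with rfl | heM <;>
      rcases Finset.mem_insert.mp hf with rfl | hfM
    · exact hef rfl
    · rcases Sym2.mem_iff.mp hx with rfl | rfl
      exacts [ha ⟨f, hfM, hxf⟩, hb ⟨f, hfM, hxf⟩]
    · rcases Sym2.mem_iff.mp hxf with rfl | rfl
      exacts [ha ⟨e, heM, hx⟩, hb ⟨e, heM, hx⟩]
    · exact hM.2.2 e heM f hfM hef x hx hxf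

end IsMatching

def IsBipartition (A : Set V) (w : V → V → ℕ) : Prop :=
  ∀ ⦃u t : V⦄, 1 ≤ w u t → (u ∈ A ↔ t ∉ A)

namespace IsBipartition

variable {A : Set V} {w : V → V → ℕ}

lemma compl (hA : IsBipartition A w) : IsBipartition Aᶜ w :=
  fun u t h => by
    have := hA h
    simp only [Set.mem_compl_iff]
    tauto

lemma exists_mem (hA : IsBipartition A w) (v : V) : ∃ B, IsBipartition B w ∧ v ∈ B := by
  by_cases hv : v ∈ A
  exacts [⟨A, hA, hv⟩, ⟨Aᶜ, hA.compl, hv⟩]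

lemma mono {w' : V → V → ℕ} (hA : IsBipartition A w) (hw : ∀ u v, w' u v ≤ w u v) :
    IsBipartition A w' :=
  fun u t h => hA (h.trans (hw u t))

lemma iff_of_matching_edges {M N : Finset (Sym2 V)} (hA : IsBipartition A w)
    (hM : IsMatching w M) (hN : IsMatching w N) {v y z : V} (hvy : s(v, y) ∈ N)
    (hyz : s(y, z) ∈ M) : z ∈ A ↔ v ∈ A := by
  have := hA (hN.2.1 v y hvy)
  have := hA (hM.2.1 y z hyz)
  tauto

end IsBipartition

/-- `P` is `M` switched along the alternating path of `M ∪ N` that starts at `v`; the vertex `x`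
is the far end of the path, which loses its `M`-edge only if the path has even length. -/
theorem IsMatching.exists_exchange [DecidableEq V] {w : V → V → ℕ} {A : Set V}
    (hA : IsBipartition A w) {M N : Finset (Sym2 V)} (hM : IsMatching w M)
    (hN : IsMatching w N) {v : V} (hNv : Saturates N v) (hMv : ¬ Saturates M v) :
    ∃ P ⊆ M ∪ N, IsMatching w P ∧ Saturates P v ∧
      ∃ x, ∀ z, Saturates M z → ¬ Saturates P z → z = x ∧ ¬ Saturates N z ∧ (z ∈ A ↔ v ∈ A) := by
  induction M using Finset.strongInduction generalizing N v with
  | H M ih =>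
  obtain ⟨y, hvy⟩ := saturates_iff_exists_mem.mp hNv
  have hPv {Q : Finset (Sym2 V)} : Saturates (insert s(v, y) Q) v :=
    saturates_insert_iff.mpr (Or.inl (Sym2.mem_mk_left v y))
  have hPy {Q : Finset (Sym2 V)} : Saturates (insert s(v, y) Q) y :=
    saturates_insert_iff.mpr (Or.inl (Sym2.mem_mk_right v y))
  by_cases hMy : ¬ Saturates M y
  · refine ⟨insert s(v, y) M, ?_, hM.insert_of_mem hN hvy hMv hMy, hPv, v, fun z hz hPz => ?_⟩
    · exact Finset.insert_subset (Finset.mem_union_right _ hvy) Finset.subset_union_left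
    · exact absurd (hz.mono (Finset.subset_insert _ _)) hPz
  obtain ⟨z0, hyz0⟩ := saturates_iff_exists_mem.mp (not_not.mp hMy)
  set M' := M.erase s(y, z0)
  set N' := N.erase s(v, y)
  have hM'v : ¬ Saturates M' v := fun h => hMv (h.mono (Finset.erase_subset _ _))
  have hM'y : ¬ Saturates M' y := hM.not_saturates_erase hyz0 (Sym2.mem_mk_left y z0)
  have hM'z0 : ¬ Saturates M' z0 := hM.not_saturates_erase hyz0 (Sym2.mem_mk_right y z0)
  have hN'v : ¬ Saturates N' v := hN.not_saturates_erase hvy (Sym2.mem_mk_left v y)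
  have hN'y : ¬ Saturates N' y := hN.not_saturates_erase hvy (Sym2.mem_mk_right v y)
  have hside : z0 ∈ A ↔ v ∈ A := hA.iff_of_matching_edges hM hN hvy hyz0
  have hsub {Q : Finset (Sym2 V)} (hQ : Q ⊆ M' ∪ N') : insert s(v, y) Q ⊆ M ∪ N :=
    Finset.insert_subset (Finset.mem_union_right _ hvy) (hQ.trans
      (Finset.union_subset_union (Finset.erase_subset _ _) (Finset.erase_subset _ _)))
  have hsatM {z : V} (hz : Saturates M z) (hzy : z ≠ y) : z = z0 ∨ Saturates M' z :=
    ((saturates_erase_iff hyz0).mp hz).imp_left fun h => (Sym2.mem_iff.mp h).resolve_left hzy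
  have hsatN {z : V} (hzv : z ≠ v) (hzy : z ≠ y) (hz : ¬ Saturates N' z) : ¬ Saturates N z := by
    rw [saturates_erase_iff hvy, Sym2.mem_iff]
    tauto
  by_cases hN'z0 : Saturates N' z0
  · obtain ⟨P', hP'sub, hP', hP'z0, x, hlost⟩ :=
      ih M' (Finset.erase_ssubset hyz0) (hM.mono (Finset.erase_subset _ _))
        (hN.mono (Finset.erase_subset _ _)) hN'z0 hM'z0
    have hP'v : ¬ Saturates P' v := fun h => (saturates_union_iff.mp (h.mono hP'sub)).elim hM'v hN'v
    have hP'y : ¬ Saturates P' y := fun h => (saturates_union_iff.mp (h.mono hP'sub)).elim hM'y hN'y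
    refine ⟨insert s(v, y) P', hsub hP'sub, hP'.insert_of_mem hN hvy hP'v hP'y, hPv, x,
      fun z hz hPz => ?_⟩
    have hzy : z ≠ y := by rintro rfl; exact hPz hPy
    have hzv : z ≠ v := by rintro rfl; exact hMv hz
    have hzz0 : z ≠ z0 := by rintro rfl; exact hPz (hP'z0.mono (Finset.subset_insert _ _))
    obtain ⟨rfl, hN'z, hzA⟩ :=
      hlost z ((hsatM hz hzy).resolve_left hzz0) (fun h => hPz (h.mono (Finset.subset_insert _ _)))
    exact ⟨rfl, hsatN hzv hzy hN'z, hzA.trans hside⟩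
  · refine ⟨insert s(v, y) M', hsub Finset.subset_union_left,
      (hM.mono (Finset.erase_subset _ _)).insert_of_mem hN hvy hM'v hM'y, hPv, z0,
      fun z hz hPz => ?_⟩
    have hzy : z ≠ y := by rintro rfl; exact hPz hPy
    obtain rfl := (hsatM hz hzy).resolve_right fun h => hPz (h.mono (Finset.subset_insert _ _))
    have hzv : z ≠ v := by rintro rfl; exact hMv hz
    exact ⟨rfl, hsatN hzv hzy hN'z0, hside⟩

section Degrees

variable [Fintype V] {w : V → V → ℕ}

lemma deg_le_maxDeg (v : V) : deg w v ≤ maxDeg w :=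
  Finset.le_sup (f := deg w) (Finset.mem_univ v)

lemma maxDeg_eq_zero_iff : maxDeg w = 0 ↔ ∀ u v, w u v = 0 := by
  rw [maxDeg, ← Nat.bot_eq_zero, Finset.sup_eq_bot_iff]
  simp only [Finset.mem_univ, true_implies, deg, Nat.bot_eq_zero, Finset.sum_eq_zero_iff]

lemma sum_deg_le_card_mul_maxDeg (hsym : ∀ u v, w u v = w v u) {S T : Finset V}
    (hST : ∀ i ∈ S, ∀ u, 1 ≤ w i u → u ∈ T) : ∑ i ∈ S, deg w i ≤ T.card * maxDeg w :=
  calc ∑ i ∈ S, deg w i = ∑ i ∈ S, ∑ u ∈ T, w i u := by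
        refine Finset.sum_congr rfl fun i hi => (Finset.sum_subset (Finset.subset_univ T) ?_).symm
        intro u _ hu
        by_contra h
        exact hu (hST i hi u (Nat.one_le_iff_ne_zero.mpr h))
    _ = ∑ u ∈ T, ∑ i ∈ S, w u i := by
        rw [Finset.sum_comm]
        simp only [hsym]
    _ ≤ ∑ u ∈ T, deg w u :=
        Finset.sum_le_sum fun u _ => Finset.sum_le_sum_of_subset (Finset.subset_univ S)
    _ ≤ T.card * maxDeg w := Finset.sum_le_card_nsmul _ _ _ fun u _ => deg_le_maxDeg u

lemma card_le_card_of_heavy {A : Set V} (hsym : ∀ u v, w u v = w v u)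
    (hA : IsBipartition A w) (hΔ : 0 < maxDeg w) {S T : Finset V}
    (hS : ∀ i ∈ S, i ∈ A ∧ Heavy w i) (hST : ∀ i ∈ S, ∀ u, 1 ≤ w i u → u ∈ T) :
    S.card ≤ T.card := by
  set n := Fintype.card V
  have hdouble : S.card * (n - 1) * maxDeg w ≤ n * T.card * maxDeg w :=
    calc S.card * (n - 1) * maxDeg w = ∑ _i ∈ S, (n - 1) * maxDeg w := by
          rw [Finset.sum_const, smul_eq_mul, mul_assoc]
      _ ≤ ∑ i ∈ S, n * deg w i := Finset.sum_le_sum fun i hi => (hS i hi).2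
      _ = n * ∑ i ∈ S, deg w i := (Finset.mul_sum _ _ _).symm
      _ ≤ n * T.card * maxDeg w := by
          rw [mul_assoc]
          exact Nat.mul_le_mul_left n (sum_deg_le_card_mul_maxDeg hsym hST)
  have hcard := Nat.le_of_mul_le_mul_right hdouble hΔ
  by_contra! hlt
  have hSn : S.card ≤ n := Finset.card_le_univ S
  have hn : n ≤ S.card := by
    obtain ⟨m, hm⟩ : ∃ m, n = m + 1 := ⟨n - 1, by omega⟩
    rw [hm, Nat.add_sub_cancel] at hcard
    nlinarith
  have hSuniv : S = Finset.univ := Finset.eq_univ_of_card S (le_antisymm hSn hn)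
  obtain ⟨u, v, huv⟩ : ∃ u v, w u v ≠ 0 := by
    by_contra! h
    exact hΔ.ne' (maxDeg_eq_zero_iff.mpr h)
  have hu := (hS u (hSuniv ▸ Finset.mem_univ u)).1
  have hv := (hS v (hSuniv ▸ Finset.mem_univ v)).1
  exact (hA (Nat.one_le_iff_ne_zero.mpr huv)).mp hu hv

end Degrees

lemma isMatching_image_of_injective [Fintype V] [DecidableEq V] {w : V → V → ℕ} {A : Set V}
    (hsym : ∀ u v, w u v = w v u) (hA : IsBipartition A w) {ι : Type} [Fintype ι]
    {g f : ι → V} (hg : Function.Injective g) (hf : Function.Injective f) (hgA : ∀ i, g i ∈ A)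
    (hw : ∀ i, 1 ≤ w (g i) (f i)) : IsMatching w (Finset.univ.image fun i => s(g i, f i)) := by
  have hfA i : f i ∉ A := (hA (hw i)).mp (hgA i)
  refine ⟨?_, ?_, ?_⟩
  · simp only [Finset.mem_image, Finset.mem_univ, true_and, forall_exists_index,
      forall_apply_eq_imp_iff, Sym2.mk_isDiag_iff]
    exact fun i h => hfA i (h ▸ hgA i)
  · intro u v huv
    obtain ⟨i, -, hi⟩ := Finset.mem_image.mp huv
    rcases Sym2.eq_iff.mp hi with ⟨rfl, rfl⟩ | ⟨rfl, rfl⟩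
    exacts [hw i, hsym _ _ ▸ hw i]
  · simp only [Finset.mem_image, Finset.mem_univ, true_and, forall_exists_index,
      forall_apply_eq_imp_iff]
    intro i j hij x hx hxj
    have hne : i ≠ j := fun h => hij (h ▸ rfl)
    rcases Sym2.mem_iff.mp hx with rfl | rfl <;> rcases Sym2.mem_iff.mp hxj with h | h
    exacts [hne (hg h), hfA j (h ▸ hgA i), hfA i (h ▸ hgA j), hne (hf h)]

theorem exists_isMatching_saturating_heavy [Fintype V] [DecidableEq V] {w : V → V → ℕ}
    {A : Set V} (hsym : ∀ u v, w u v = w v u) (hA : IsBipartition A w) (hΔ : 0 < maxDeg w) :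
    ∃ N, IsMatching w N ∧ ∀ i ∈ A, Heavy w i → Saturates N i := by
  let nbrs (i : {i // i ∈ A ∧ Heavy w i}) : Finset V := Finset.univ.filter (1 ≤ w i ·)
  obtain ⟨f, hf, hfw⟩ := (Finset.all_card_le_biUnion_card_iff_exists_injective nbrs).mp
    fun s => by
      simpa using card_le_card_of_heavy hsym hA hΔ (S := s.map (Function.Embedding.subtype _))
        (T := s.biUnion nbrs) (by simp +contextual)
        (by simpa [nbrs] using fun i hi hH hs u hu => ⟨i, ⟨⟨hi, hH⟩, hs⟩, hu⟩)
  refine ⟨_, isMatching_image_of_injective hsym hA Subtype.val_injective hf (fun i => i.2.1)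
    fun i => (Finset.mem_filter.mp (hfw i)).2, fun i hi hH => ⟨s(i, f ⟨i, hi, hH⟩), ?_, ?_⟩⟩
  · exact Finset.mem_image.mpr ⟨⟨i, hi, hH⟩, Finset.mem_univ _, rfl⟩
  · exact Sym2.mem_mk_left _ _

section Weights

variable [Fintype V]

lemma matchWeight_lt_of_exchange {φ : V → ℕ} {M P : Finset (Sym2 V)} {i x : V}
    (hMi : ¬ Saturates M i) (hPi : Saturates P i)
    (hlost : ∀ z, Saturates M z → ¬ Saturates P z → z = x)
    (hx : Saturates M x → ¬ Saturates P x → φ x < φ i) (hi : 0 < φ i) :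
    matchWeight φ M < matchWeight φ P := by
  set loss : V → ℕ := fun z => if Saturates M z ∧ ¬ Saturates P z then φ z else 0
  have hpointwise (z : V) : (if Saturates M z then φ z else 0) + (if z = i then φ i else 0) ≤
      (if Saturates P z then φ z else 0) + loss z := by
    by_cases hzi : z = i
    · subst hzi
      simp [loss, hMi, hPi]
    · by_cases hMz : Saturates M z <;> by_cases hPz : Saturates P z <;> simp [loss, *]
  have hsum : matchWeight φ M + φ i ≤ matchWeight φ P + loss x :=
    calc matchWeight φ M + φ i
        = ∑ z, ((if Saturates M z then φ z else 0) + (if z = i then φ i else 0)) := by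
          rw [Finset.sum_add_distrib, Finset.sum_ite_eq', if_pos (Finset.mem_univ i)]
          rfl
      _ ≤ ∑ z, ((if Saturates P z then φ z else 0) + loss z) :=
          Finset.sum_le_sum fun z _ => hpointwise z
      _ = matchWeight φ P + loss x := by
          rw [Finset.sum_add_distrib, Finset.sum_eq_single (f := loss) x
            (fun z _ hzx => if_neg fun h => hzx (hlost z h.1 h.2))
            (fun h => absurd (Finset.mem_univ x) h)]
          rfl
  have hloss : loss x < φ i := by
    simp only [loss]
    split_ifs with h
    exacts [hx h.1 h.2, hi]
  omega

variable {w : V → V → ℕ} {u : V → ℕ} {i : V}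

lemma Critical.heavy (h : Critical w i) : Heavy w i := by
  rw [Heavy, h]
  exact Nat.mul_le_mul_right _ (Nat.sub_le _ _)

lemma maxDeg_le_nsbWeight (hu : u i ≤ 1) (h : Critical w i) : maxDeg w ≤ nsbWeight w u i := by
  rw [nsbWeight, if_pos h.heavy, ← h]
  exact Nat.le_mul_of_pos_right _ (by omega)

lemma nsbWeight_lt_maxDeg (h : ¬ Heavy w i) : nsbWeight w u i < maxDeg w := by
  rw [nsbWeight, if_neg h]
  rw [Heavy, not_le] at h
  exact Nat.lt_of_mul_lt_mul_left (h.trans_le (Nat.mul_le_mul_right _ (Nat.sub_le _ _)))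

end Weights

lemma Ufun_le_one (M : ℕ → Finset (Sym2 V)) (k : ℕ) (i : V) : Ufun M k i ≤ 1 := by
  have hR (j : ℕ) : Rfun M j i ≤ 1 := by unfold Rfun; split_ifs <;> omega
  unfold Ufun
  split_ifs
  exacts [Nat.zero_le _, Nat.mul_le_mul (hR _) (hR _), hR _]

theorem saturates_of_critical_of_forall_matchWeight_le [Fintype V] [DecidableEq V]
    {w : V → V → ℕ} {A : Set V} (hsym : ∀ u v, w u v = w v u) (hA : IsBipartition A w)
    {u : V → ℕ} (hu : ∀ i, u i ≤ 1) {M : Finset (Sym2 V)} (hM : IsMatching w M)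
    (hopt : ∀ M', IsMatching w M' → matchWeight (nsbWeight w u) M' ≤ matchWeight (nsbWeight w u) M)
    (hΔ : 0 < maxDeg w) {i : V} (hi : Critical w i) : Saturates M i := by
  by_contra hMi
  obtain ⟨B, hB, hiB⟩ := hA.exists_mem i
  obtain ⟨N, hN, hNsat⟩ := exists_isMatching_saturating_heavy hsym hB hΔ
  obtain ⟨P, -, hP, hPi, x, hlost⟩ := hM.exists_exchange hB hN (hNsat i hiB hi.heavy) hMi
  have hφi := maxDeg_le_nsbWeight (hu i) hi
  refine (hopt P hP).not_gt (matchWeight_lt_of_exchange hMi hPi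
    (fun z hz hPz => (hlost z hz hPz).1) (fun hx hPx => ?_) (hΔ.trans_le hφi))
  obtain ⟨-, hNx, hxB⟩ := hlost x hx hPx
  exact (nsbWeight_lt_maxDeg fun hH => hNx (hNsat x (hxB.mpr hiB) hH)).trans_le hφi

section Removal

variable [DecidableEq V] {w : V → V → ℕ} {M : Finset (Sym2 V)}

lemma removeMatching_le (u v : V) : removeMatching w M u v ≤ w u v := by
  unfold removeMatching
  split_ifs <;> omega

lemma removeMatching_symm (hsym : ∀ u v, w u v = w v u) (u v : V) :
    removeMatching w M u v = removeMatching w M v u := by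
  simp only [removeMatching, Sym2.eq_swap (a := u), hsym u v]

variable [Fintype V]

lemma deg_removeMatching_of_not_saturates {v : V} (hv : ¬ Saturates M v) :
    deg (removeMatching w M) v = deg w v :=
  Finset.sum_congr rfl fun u _ => if_neg fun h => hv ⟨_, h, Sym2.mem_mk_left v u⟩

lemma deg_removeMatching_add_one (hM : IsMatching w M) {v : V} (hv : Saturates M v) :
    deg (removeMatching w M) v + 1 = deg w v := by
  obtain ⟨y, hy⟩ := saturates_iff_exists_mem.mp hv
  have hpointwise (u : V) : removeMatching w M v u + (if u = y then 1 else 0) = w v u := by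
    unfold removeMatching
    by_cases huy : u = y
    · subst huy
      have := hM.2.1 v u hy
      rw [if_pos hy, if_pos rfl]
      omega
    · rw [if_neg fun h => huy (hM.eq_of_mem h hy), if_neg huy, add_zero]
  calc deg (removeMatching w M) v + 1
      = ∑ u, (removeMatching w M v u + if u = y then 1 else 0) := by
        rw [Finset.sum_add_distrib, Finset.sum_ite_eq', if_pos (Finset.mem_univ _)]
        rfl
    _ = deg w v := Finset.sum_congr rfl fun u _ => hpointwise u

lemma maxDeg_removeMatching (hM : IsMatching w M)
    (hcrit : 0 < maxDeg w → ∀ i, Critical w i → Saturates M i) :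
    maxDeg (removeMatching w M) = maxDeg w - 1 := by
  apply le_antisymm
  · refine Finset.sup_le fun v _ => ?_
    have hv := deg_le_maxDeg (w := w) v
    by_cases hsat : Saturates M v
    · have := deg_removeMatching_add_one hM hsat
      omega
    · have : 0 < maxDeg w → deg w v ≠ maxDeg w := fun hΔ h => hsat (hcrit hΔ v h)
      rw [deg_removeMatching_of_not_saturates hsat]
      omega
  · refine Nat.sub_le_of_le_add (Finset.sup_le fun v _ => ?_)
    have := deg_le_maxDeg (w := removeMatching w M) v
    by_cases hsat : Saturates M v
    · have := deg_removeMatching_add_one hM hsat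
      omega
    · rw [← deg_removeMatching_of_not_saturates hsat]
      omega

end Removal

lemma CanEvacuate.maxDeg_le [Fintype V] [DecidableEq V] {w : V → V → ℕ} {T : ℕ}
    (h : CanEvacuate w T) : maxDeg w ≤ T := by
  obtain ⟨M, hM, hcount⟩ := h
  refine Finset.sup_le fun v _ => ?_
  calc deg w v = ∑ u, (Finset.univ.filter fun j => s(v, u) ∈ M j).card :=
        Finset.sum_congr rfl fun u _ => (hcount v u).symm
    _ = ∑ j, (Finset.univ.filter fun u => s(v, u) ∈ M j).card :=
        Finset.sum_card_bipartiteAbove_eq_sum_card_bipartiteBelow _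
    _ ≤ ∑ _j : Fin T, 1 := Finset.sum_le_sum fun j _ => Finset.card_le_one.mpr
        fun a ha b hb => (hM j).eq_of_mem (Finset.mem_filter.mp ha).2 (Finset.mem_filter.mp hb).2
    _ = T := by simp

lemma isBipartition_of_bipartiteOn {w : V → V → ℕ} (hsym : ∀ u v, w u v = w v u)
    (hloop : ∀ v, w v v = 0) (h : BipartiteOn (support w) Set.univ) : ∃ A, IsBipartition A w := by
  obtain ⟨A, hA⟩ := h
  refine ⟨A, fun u t hut => hA trivial trivial ⟨?_, hut, hsym u t ▸ hut⟩⟩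
  rintro rfl
  rw [hloop] at hut
  omega

namespace NSBRun

variable [Fintype V] [DecidableEq V] {w0 : V → V → ℕ} (run : NSBRun w0)

lemma G_le (k : ℕ) (u v : V) : run.G k u v ≤ w0 u v := by
  induction k with
  | zero => rw [run.init]
  | succ k ih => rw [run.step]; exact (removeMatching_le u v).trans ih

lemma G_symm (hsym : ∀ u v, w0 u v = w0 v u) (k : ℕ) (u v : V) : run.G k u v = run.G k v u := by
  induction k generalizing u v with
  | zero => rw [run.init]; exact hsym u v
  | succ k ih => rw [run.step]; exact removeMatching_symm ih u v

lemma maxDeg_G {A : Set V} (hsym : ∀ u v, w0 u v = w0 v u) (hA : IsBipartition A w0) (k : ℕ) :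
    maxDeg (run.G k) = maxDeg w0 - k := by
  induction k with
  | zero => rw [run.init]; rfl
  | succ k ih =>
    rw [run.step, ← Nat.sub_sub, ← ih]
    exact maxDeg_removeMatching (run.matching k) fun hΔ i hi =>
      saturates_of_critical_of_forall_matchWeight_le (run.G_symm hsym k) (hA.mono (run.G_le k))
        (Ufun_le_one run.M k) (run.matching k) (run.opt k) hΔ hi

lemma G_add_card_filter (k : ℕ) (u v : V) :
    run.G k u v + ((Finset.range k).filter fun j => s(u, v) ∈ run.M j).card = w0 u v := by
  induction k with
  | zero => simp [run.init]
  | succ k ih =>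
    rw [Finset.range_add_one, Finset.filter_insert, run.step, removeMatching]
    by_cases hmem : s(u, v) ∈ run.M k
    · rw [if_pos hmem, if_pos hmem, Finset.card_insert_of_notMem (by simp)]
      have := (run.matching k).2.1 u v hmem
      omega
    · rw [if_neg hmem, if_neg hmem]
      exact ih

lemma canEvacuate {T : ℕ} (hT : ∀ u v, run.G T u v = 0) : CanEvacuate w0 T := by
  refine ⟨fun j => run.M j, fun j => (run.matching j).of_le (run.G_le j), fun u v => ?_⟩
  rw [← run.G_add_card_filter T u v, hT, zero_add, Finset.card_filter, Finset.card_filter]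
  exact Fin.sum_univ_eq_sum_range (fun j => if s(u, v) ∈ run.M j then 1 else 0) T

end NSBRun

theorem nsb_bipartite_evacuation_optimal_general {V : Type} [Fintype V] [DecidableEq V]
    (w0 : V → V → ℕ) (hsymm : ∀ u v, w0 u v = w0 v u) (hloop : ∀ v, w0 v v = 0)
    (hbip : BipartiteOn (support w0) Set.univ)
    (run : NSBRun w0)
    (X' : ℕ) (hX' : IsLeast {T' | CanEvacuate w0 T'} X') :
    IsLeast {k | ∀ u v : V, run.G k u v = 0} (maxDeg w0) ∧ maxDeg w0 = X' := by
  obtain ⟨A, hA⟩ := isBipartition_of_bipartiteOn hsymm hloop hbip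
  have hempty (k : ℕ) : (∀ u v, run.G k u v = 0) ↔ maxDeg w0 ≤ k := by
    rw [← maxDeg_eq_zero_iff, run.maxDeg_G hsymm hA]
    omega
  have hdone := (hempty _).mpr le_rfl
  exact ⟨⟨hdone, fun k hk => (hempty k).mp hk⟩,
    le_antisymm hX'.1.maxDeg_le (hX'.2 (run.canEvacuate hdone))⟩

/-- If the support of `G(0)` is bipartite, every NSB evacuation run has
evacuation time exactly `Δ(0)`, and `Δ(0)` equals the minimum evacuation time `X′`. -/
theorem nsb_bipartite_evacuation_optimal {V : Type} [Fintype V] [DecidableEq V]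
    (w0 : V → V → ℕ) (hsymm : ∀ u v, w0 u v = w0 v u) (hloop : ∀ v, w0 v v = 0)
    (hn : 2 ≤ Fintype.card V)
    (hbip : BipartiteOn (support w0) Set.univ)
    (run : NSBRun w0)
    (X' : ℕ) (hX' : IsLeast {T' | CanEvacuate w0 T'} X') :
    IsLeast {k | ∀ u v : V, run.G k u v = 0} (maxDeg w0) ∧ maxDeg w0 = X' :=
  nsb_bipartite_evacuation_optimal_general w0 hsymm hloop hbip run X' hX'

end NSBPaper
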